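/- arXiv:1505.03508 — 7 statements merged into one kernel-verified Lean document; each statement's English description precedes it below -/
import Mathlib

section
/- Let q be a prime and m a positive integer. Then q^m - 1 is a power of 2 if and only if (m = 1 and q is a Fermat prime, i.e., q = 2^k + 1 for some k ≥ 1) or (q = 3 and m = 2). -/
theorem fuchs_stmt0 (q m : ℕ) (hq : q.Prime) (hm : 1 ≤ m) :
    (∃ r : ℕ, 1 ≤ r ∧ q ^ m - 1 = 2 ^ r) ↔
      ((m = 1 ∧ ∃ k : ℕ, 1 ≤ k ∧ q = 2 ^ k + 1) ∨ (q = 3 ∧ m = 2)) := by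
  constructor
  · rintro ⟨r, hr, h⟩
    have hq2 := hq.two_le
    have hq1 : 1 ≤ q ^ m := Nat.one_le_pow _ _ (by omega)
    have h2r : 2 ≤ 2 ^ r := by
      calc (2:ℕ) = 2 ^ 1 := rfl
      _ ≤ 2 ^ r := Nat.pow_le_pow_right (by norm_num) hr
    have h2rmod : 2 ^ r % 2 = 0 := by
      have : (2:ℕ) ∣ 2 ^ r := dvd_pow_self 2 (by omega)
      omega
    rcases hq.eq_two_or_odd' with rfl | hqodd
    · -- q = 2 : impossible, 2^m - 1 is odd
      exfalso
      have : (2:ℕ) ∣ 2 ^ m := dvd_pow_self 2 (by omega)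
      have h2m : 2 ≤ 2 ^ m := by
        calc (2:ℕ) = 2 ^ 1 := rfl
        _ ≤ 2 ^ m := Nat.pow_le_pow_right (by norm_num) hm
      omega
    · have hq3 : 3 ≤ q := by
        rcases hqodd with ⟨c, hc⟩; omega
      rcases eq_or_lt_of_le hm with h1 | hm2
      · -- m = 1
        left
        refine ⟨h1.symm, r, hr, ?_⟩
        rw [← h1] at h
        simp at h
        omega
      · -- m ≥ 2
        rcases Nat.even_or_odd m with ⟨t, ht⟩ | hmodd
        · -- m even, m = t + t
          right
          have ht1 : 1 ≤ t := by omega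
          set a := q ^ t with ha
          have haq : q ≤ a := by
            calc q = q ^ 1 := (pow_one q).symm
            _ ≤ q ^ t := Nat.pow_le_pow_right (by omega) ht1
          have haodd : a % 2 = 1 := Nat.odd_iff.mp (hqodd.pow)
          have hfac : (a - 1) * (a + 1) = 2 ^ r := by
            have hqm : q ^ m = a * a := by
              rw [ht, pow_add]
            rw [← h, hqm]
            have h1a : 1 ≤ a := by omega
            zify [h1a, show 1 ≤ a * a from Nat.one_le_iff_ne_zero.mpr (by positivity)]
            ring
          have hd1 : (a - 1) ∣ 2 ^ r := ⟨a + 1, hfac.symm⟩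
          have hd2 : (a + 1) ∣ 2 ^ r := ⟨a - 1, by rw [← hfac]; ring⟩
          obtain ⟨i, hi, hia⟩ := (Nat.dvd_prime_pow Nat.prime_two).mp hd1
          obtain ⟨j, hj, hja⟩ := (Nat.dvd_prime_pow Nat.prime_two).mp hd2
          -- a - 1 = 2 ^ i, a + 1 = 2 ^ j
          have ha3 : a = 3 := by
            match i, hia with
            | 0, hia => simp at hia; omega
            | 1, hia => omega
            | (i+2), hia =>
              exfalso
              have d2 : (4:ℕ) ∣ 2 ^ (i + 2) := ⟨2 ^ i, by ring⟩
              rcases Nat.lt_or_ge j 2 with hj2 | hj2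
              · interval_cases j <;> omega
              · have d1 : (4:ℕ) ∣ 2 ^ j :=
                  ⟨2 ^ (j - 2), by rw [show (4:ℕ) = 2 ^ 2 from rfl, ← pow_add]; congr 1; omega⟩
                omega
          have hqdvd : q ∣ 3 := by
            rw [← ha3, ha]
            exact dvd_pow_self q (by omega)
          have hq3' : q = 3 := by
            rcases (Nat.Prime.eq_one_or_self_of_dvd (by norm_num) q hqdvd) with h' | h'
            · omega
            · exact h'
          have ht' : t = 1 := by
            have hqt : q ^ t = 3 := by rw [← ha, ha3]
            rw [hq3'] at hqt
            by_contra hne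
            have h2t : 2 ≤ t := by omega
            have : 3 ^ 2 ≤ 3 ^ t := Nat.pow_le_pow_right (by norm_num) h2t
            norm_num at this
            omega
          exact ⟨hq3', by omega⟩
        · -- m odd, m ≥ 3 : contradiction
          exfalso
          set S := ∑ i ∈ Finset.range m, q ^ i with hSdef
          have hS : (q - 1) * S = 2 ^ r := by
            rw [← h]
            have h1 : ((q:ℤ) - 1) * (∑ i ∈ Finset.range m, (q:ℤ) ^ i) = (q:ℤ) ^ m - 1 := by
              rw [mul_comm]; exact geom_sum_mul _ _
            have : (((q - 1) * S : ℕ) : ℤ) = ((q ^ m - 1 : ℕ) : ℤ) := by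
              push_cast [Nat.cast_sub (by omega : 1 ≤ q), Nat.cast_sub hq1, hSdef]
              exact h1
            exact_mod_cast this
          have hSd : S ∣ 2 ^ r := ⟨q - 1, by rw [← hS]; ring⟩
          obtain ⟨i, hi, hiS⟩ := (Nat.dvd_prime_pow Nat.prime_two).mp hSd
          have hSodd : S % 2 = 1 := by
            have h1 : ∀ x ∈ Finset.range m, q ^ x % 2 = 1 :=
              fun x _ => Nat.odd_iff.mp hqodd.pow
            calc S % 2 = (∑ x ∈ Finset.range m, q ^ x % 2) % 2 := Finset.sum_nat_mod _ _ _
              _ = (∑ x ∈ Finset.range m, 1) % 2 := by rw [Finset.sum_congr rfl h1]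
              _ = m % 2 := by simp
              _ = 1 := Nat.odd_iff.mp hmodd
          have hSge : 1 + q ≤ S := by
            calc 1 + q = ∑ x ∈ Finset.range 2, q ^ x := by
                  simp [Finset.sum_range_succ]
              _ ≤ S := Finset.sum_le_sum_of_subset (Finset.range_subset_range.mpr (by omega))
          match i, hiS with
          | 0, hiS => simp at hiS; omega
          | (i+1), hiS =>
            have : (2:ℕ) ∣ 2 ^ (i + 1) := dvd_pow_self 2 (by omega)
            omega
  · rintro (⟨rfl, k, hk, rfl⟩ | ⟨rfl, rfl⟩)
    · exact ⟨k, hk, by simp⟩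
    · exact ⟨3, by norm_num⟩
end

section
/- Let q be a prime, p an odd prime, and m, r positive integers. If q^m - 1 = p^r, then r = 1, q = 2, and p = 2^m - 1 (so p is a Mersenne prime). -/
theorem fuchs_stmt1 (q p m r : ℕ) (hq : q.Prime) (hp : p.Prime) (hpodd : Odd p)
    (hm : 1 ≤ m) (hr : 1 ≤ r) (h : q ^ m - 1 = p ^ r) :
    r = 1 ∧ q = 2 ∧ p = 2 ^ m - 1 := by
  have hp2 : 2 ≤ p := hp.two_le
  have hp3 : 3 ≤ p := by rcases hpodd with ⟨u, hu⟩; omega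
  have hq2 : 2 ≤ q := hq.two_le
  have hqm1 : 1 ≤ q ^ m := Nat.one_le_pow _ _ (by omega)
  have heq : q ^ m = p ^ r + 1 := by omega
  have hpr3 : 3 ≤ p ^ r := le_trans hp3 (by simpa using Nat.pow_le_pow_right (by omega) hr)
  have hqe : q = 2 := by
    have hodd : Odd (p ^ r) := hpodd.pow
    have hev : 2 ∣ q ^ m := by
      rcases hodd with ⟨t, ht⟩; omega
    have : 2 ∣ q := Nat.Prime.dvd_of_dvd_pow Nat.prime_two hev
    exact ((Nat.prime_dvd_prime_iff_eq Nat.prime_two hq).mp this).symm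
  subst hqe
  have h2m : 2 ^ m = p ^ r + 1 := heq
  have hm2 : 2 ≤ m := by
    by_contra hc
    have : m = 1 := by omega
    rw [this] at h2m; omega
  have hr1 : r = 1 := by
    by_contra hne
    rcases Nat.even_or_odd r with he | ho
    · obtain ⟨s, hs⟩ := he
      have hs1 : 1 ≤ s := by omega
      have hodd : Odd (p ^ s) := hpodd.pow
      obtain ⟨t, ht⟩ := hodd
      have hsq : p ^ r = (p ^ s) ^ 2 := by rw [hs]; ring
      have h4 : 2 ^ m = 4 * (t ^ 2 + t) + 2 := by rw [h2m, hsq, ht]; ring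
      have : (4 : ℕ) ∣ 2 ^ m := by
        have := pow_dvd_pow 2 hm2
        simpa [pow_two] using this
      omega
    · have hr3 : 3 ≤ r := by rcases ho with ⟨u, hu⟩; omega
      set S : ℤ := ∑ i ∈ Finset.range r, (-(p : ℤ)) ^ i with hSdef
      have key : ((p : ℤ) + 1) * S = (p : ℤ) ^ r + 1 := by
        have hg := geom_sum_mul (-(p : ℤ)) r
        rw [ho.neg_pow] at hg
        linear_combination -hg
      have h2mz : ((p : ℤ) + 1) * S = (2 : ℤ) ^ m := by
        rw [key]; exact_mod_cast h2m.symm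
      have hSdvd : S ∣ (2 : ℤ) ^ m := ⟨(p : ℤ) + 1, by linarith [h2mz, mul_comm S ((p:ℤ)+1)]⟩
      have hpz : ((p : ZMod 2)) = 1 := by
        rw [← ZMod.natCast_mod, Nat.odd_iff.mp hpodd]; norm_num
      have hScast : ((S : ZMod 2)) = 1 := by
        rw [hSdef]
        push_cast
        rw [hpz]
        have hneg : (-1 : ZMod 2) = 1 := by decide
        rw [hneg]
        simp only [one_pow, Finset.sum_const, Finset.card_range, nsmul_eq_mul, mul_one]
        rw [← ZMod.natCast_mod, Nat.odd_iff.mp ho]; norm_num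
      have hSodd : Odd S := by
        rw [← Int.not_even_iff_odd, even_iff_two_dvd,
          show (2:ℤ) = ((2:ℕ):ℤ) by norm_num, ← ZMod.intCast_zmod_eq_zero_iff_dvd]
        rw [hScast]; decide
      have hSpos : 0 < S := by
        rcases lt_trichotomy S 0 with hlt | he | hgt
        · nlinarith [h2mz, pow_pos (by norm_num : (0:ℤ) < 2) m,
            (by positivity : (0:ℤ) < (p:ℤ) + 1)]
        · rw [he] at h2mz
          simp at h2mz
          have := pow_pos (by norm_num : (0:ℤ) < 2) m
          omega
        · exact hgt
      have hdvdN : S.natAbs ∣ 2 ^ m := by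
        have h1 := Int.natAbs_dvd_natAbs.mpr hSdvd
        have h2 : ((2:ℤ) ^ m).natAbs = 2 ^ m := by
          rw [Int.natAbs_pow]; rfl
        rwa [h2] at h1
      have hnodd : Odd S.natAbs := Int.natAbs_odd.mpr hSodd
      have hcop : Nat.Coprime 2 S.natAbs := by
        rw [Nat.Prime.coprime_iff_not_dvd Nat.prime_two]
        have hmod := Nat.odd_iff.mp hnodd
        omega
      have hS1 : S.natAbs = 1 :=
        Nat.eq_one_of_dvd_coprimes (Nat.Coprime.pow_left m hcop) hdvdN (dvd_refl _)
      have hSeq : S = 1 := by omega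
      rw [hSeq, mul_one] at key
      have hppr : (p : ℤ) ^ r = (p : ℤ) := by linarith
      have hpprN : p ^ r = p ^ 1 := by
        have : (p:ℤ)^r = (p:ℤ)^1 := by rw [pow_one]; exact hppr
        exact_mod_cast this
      exact hne (Nat.pow_right_injective hp2 hpprN)
  subst hr1
  exact ⟨rfl, rfl, by simpa using h.symm⟩
end

section
/- If G is a torsion-free abelian group, then the group of units of the group algebra F_2[G] is isomorphic to G; more precisely, every unit of F_2[G] is of the form [g] for a unique g in G. -/
/-!
A torsion-free abelian group embeds into its divisible hull, a `ℚ`-vector space, so it has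
"two unique products": any finite sets `A`, `B` with `|A| |B| > 1` admit two distinct pairs
`(a, b) ∈ A × B` whose product is attained only once. If `f * g = 1` in `F₂[G]` and the
supports of `f` and `g` were not both singletons, both such products would survive in `f * g`
and hence equal `1`, contradicting uniqueness. So every unit is a single group element, with
coefficient `1` since that is the only nonzero element of `F₂`.
-/

open MonoidAlgebra Finset

theorem TwoUniqueSums.of_isAddTorsionFree (M : Type*) [AddCommGroup M] [IsAddTorsionFree M] :
    TwoUniqueSums M :=
  .of_injective_addHom (DivisibleHull.coeAddMonoidHom M).toAddHom DivisibleHull.coe_injective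
    inferInstance

theorem TwoUniqueProds.of_isMulTorsionFree (G : Type*) [CommGroup G] [IsMulTorsionFree G] :
    TwoUniqueProds G :=
  have := TwoUniqueSums.of_isAddTorsionFree (Additive G)
  inferInstanceAs (TwoUniqueProds (Multiplicative (Additive G)))

namespace MonoidAlgebra

variable {R A : Type*} [Semiring R] [NoZeroDivisors R]

theorem card_support_mul_card_support_le_one_of_mul_eq_one [MulOneClass A] [TwoUniqueProds A]
    {f g : R[A]} (h : f * g = 1) : #f.coeff.support * #g.coeff.support ≤ 1 := by
  by_contra! hcard
  obtain ⟨p, hp, q, hq, hpq, hup, huq⟩ := TwoUniqueProds.uniqueMul_of_one_lt_card hcard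
  rw [mem_product] at hp hq
  have mul_eq_one {a b : A} (ha : a ∈ f.coeff.support) (hb : b ∈ g.coeff.support)
      (hu : UniqueMul f.coeff.support g.coeff.support a b) : a * b = 1 := by
    have hab : (f * g).coeff (a * b) ≠ 0 := by
      rw [coeff_mul_mul_of_uniqueMul hu]
      exact mul_ne_zero (Finsupp.mem_support_iff.1 ha) (Finsupp.mem_support_iff.1 hb)
    by_contra hne
    rw [h, one_def, coeff_single, Finsupp.single_eq_of_ne hne] at hab
    exact hab rfl
  have := hup hq.1 hq.2 ((mul_eq_one hq.1 hq.2 huq).trans (mul_eq_one hp.1 hp.2 hup).symm)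
  exact hpq (Prod.ext this.1.symm this.2.symm)

theorem exists_eq_single_of_mul_eq_one [Nontrivial R] [MulOneClass A] [TwoUniqueProds A]
    {f g : R[A]} (h : f * g = 1) : ∃ a r, r ≠ 0 ∧ f = single a r := by
  have hf : 0 < #f.coeff.support := card_pos.2 <| Finsupp.support_nonempty_iff.2 <|
    coeff_eq_zero.not.2 (left_ne_zero_of_mul_eq_one h)
  have hg : 0 < #g.coeff.support := card_pos.2 <| Finsupp.support_nonempty_iff.2 <|
    coeff_eq_zero.not.2 (right_ne_zero_of_mul_eq_one h)
  have hfs : #f.coeff.support = 1 := by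
    nlinarith [card_support_mul_card_support_le_one_of_mul_eq_one h]
  obtain ⟨a, r, hr, hfa⟩ := Finsupp.card_support_eq_one'.1 hfs
  exact ⟨a, r, hr, coeff_injective hfa⟩

theorem exists_eq_of_of_isUnit [Monoid A] [TwoUniqueProds A] {f : (ZMod 2)[A]} (hf : IsUnit f) :
    ∃ a, f = of (ZMod 2) A a := by
  obtain ⟨u, rfl⟩ := hf
  obtain ⟨a, r, hr, hu⟩ := exists_eq_single_of_mul_eq_one u.mul_inv
  have hr1 : r = 1 := (by decide : ∀ r : ZMod 2, r ≠ 0 → r = 1) r hr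
  exact ⟨a, by rw [hu, hr1, of_apply]⟩

end MonoidAlgebra

theorem fuchs_stmt3 (G : Type*) [CommGroup G] (hG : ∀ g : G, g ≠ 1 → ¬IsOfFinOrder g) :
    (∀ u : (MonoidAlgebra (ZMod 2) G)ˣ,
      ∃! g : G, (u : MonoidAlgebra (ZMod 2) G) = MonoidAlgebra.of (ZMod 2) G g) ∧
    Nonempty (G ≃* (MonoidAlgebra (ZMod 2) G)ˣ) := by
  have : IsMulTorsionFree G := .of_not_isOfFinOrder fun g => hG g
  have : TwoUniqueProds G := .of_isMulTorsionFree G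
  have hof : Function.Injective (of (ZMod 2) G) := of_injective
  refine ⟨fun u => ?_,
    ⟨.ofBijective ((Units.map (of (ZMod 2) G)).comp toUnits.toMonoidHom) ⟨?_, ?_⟩⟩⟩
  · obtain ⟨g, hg⟩ := exists_eq_of_of_isUnit u.isUnit
    exact ⟨g, hg, fun g' hg' => hof (hg' ▸ hg)⟩
  · exact fun g h hgh => hof congr(Units.val $hgh)
  · intro u
    obtain ⟨g, hg⟩ := exists_eq_of_of_isUnit u.isUnit
    exact ⟨g, Units.ext hg.symm⟩
end

section
/- There is no ring of characteristic 2 whose group of units is cyclic of order 2^n for any n ≥ 3. -/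
theorem fuchs_stmt7 (n : ℕ) (hn : 3 ≤ n) (R : Type*) [Ring R] (hchar : ringChar R = 2) :
    ¬ (IsCyclic Rˣ ∧ Nat.card Rˣ = 2 ^ n) := by
  rintro ⟨hcyc, hcard⟩
  classical
  -- basic char 2 facts
  have h2 : (2 : R) = 0 := by
    have := ringChar.Nat.cast_ringChar (R := R)
    rwa [hchar] at this
  have hxx : ∀ x : R, x + x = 0 := by
    intro x
    have : (2 : R) * x = x + x := two_mul x
    rw [h2, zero_mul] at this; exact this.symm
  have cancel : ∀ a : R, (1 : R) + a = 1 → a = 0 := by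
    intro a h
    have : (1 : R) + a = 1 + 0 := by rw [h, add_zero]
    exact add_left_cancel this
  -- finiteness
  have hpos : 0 < Nat.card Rˣ := by rw [hcard]; positivity
  have hfin : Finite Rˣ := Nat.finite_of_card_ne_zero hpos.ne'
  have := Fintype.ofFinite Rˣ
  obtain ⟨g, hg⟩ := IsCyclic.exists_generator (α := Rˣ)
  have horder : orderOf g = 2 ^ n := by
    rw [orderOf_eq_card_of_forall_mem_zpowers hg]
    exact hcard
  set t : R := (g : R) + 1 with ht
  -- (g:R)^(2^k) = 1 + t^(2^k)
  have hkey : ∀ k : ℕ, ((g : R)) ^ (2 ^ k) = 1 + t ^ (2 ^ k) := by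
    intro k
    induction k with
    | zero =>
      simp only [pow_zero, pow_one, ht]
      rw [add_comm, add_assoc, hxx (1 : R), add_zero]
    | succ k ih =>
      have he : (2 : ℕ) ^ (k + 1) = 2 ^ k * 2 := by ring
      rw [he, pow_mul, pow_mul, ih]
      have hexp : (1 + t ^ 2 ^ k) ^ 2
          = 1 + (t ^ 2 ^ k + t ^ 2 ^ k) + (t ^ 2 ^ k) ^ 2 := by
        noncomm_ring
      rw [hexp, hxx (t ^ 2 ^ k), add_zero]
  -- t^(2^n) = 0
  have htn : t ^ (2 ^ n) = 0 := by
    have hg1 : g ^ (2 ^ n) = 1 := by rw [← horder]; exact pow_orderOf_eq_one g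
    have hc : ((g : R)) ^ (2 ^ n) = 1 := by
      rw [← Units.val_pow_eq_pow_val, hg1, Units.val_one]
    rw [hkey n] at hc
    exact cancel _ hc
  -- t^(2^(n-1)) ≠ 0
  have htn1 : t ^ (2 ^ (n - 1)) ≠ 0 := by
    intro h0
    have hne : g ^ (2 ^ (n - 1)) ≠ 1 := by
      intro h1
      have hdvd : orderOf g ∣ 2 ^ (n - 1) := orderOf_dvd_of_pow_eq_one h1
      rw [horder] at hdvd
      have h5 := Nat.le_of_dvd (by positivity) hdvd
      have h6 : 2 ^ (n - 1) < 2 ^ n := Nat.pow_lt_pow_right (by norm_num) (by omega)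
      omega
    apply hne
    ext
    rw [Units.val_pow_eq_pow_val, hkey (n - 1), h0, add_zero, Units.val_one]
  -- nilpotency index m
  have hex : ∃ m, t ^ m = 0 := ⟨2 ^ n, htn⟩
  set m := Nat.find hex with hm
  have hm0 : t ^ m = 0 := Nat.find_spec hex
  have hmlt : ∀ j < m, t ^ j ≠ 0 := fun j hj => Nat.find_min hex hj
  have hmgt : 2 ^ (n - 1) < m := by
    by_contra h
    push_neg at h
    apply htn1
    have he : t ^ (2 ^ (n - 1)) = t ^ m * t ^ (2 ^ (n - 1) - m) := by
      rw [← pow_add]; congr 1; omega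
    rw [he, hm0, zero_mul]
  have hm5 : 5 ≤ m := by
    have h4 : 4 ≤ 2 ^ (n - 1) := by
      calc (4 : ℕ) = 2 ^ 2 := by norm_num
      _ ≤ 2 ^ (n - 1) := Nat.pow_le_pow_right (by norm_num) (by omega)
    omega
  -- involution units
  have mkunit : ∀ j, m ≤ 2 * j → ∃ w : Rˣ, (w : R) = 1 + t ^ j ∧ w ^ 2 = 1 := by
    intro j hj
    have h1 : t ^ j * t ^ j = 0 := by
      rw [← pow_add]
      have he : t ^ (j + j) = t ^ m * t ^ (j + j - m) := by
        rw [← pow_add]; congr 1; omega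
      rw [he, hm0, zero_mul]
    have hsq : (1 + t ^ j) * (1 + t ^ j) = 1 := by
      have he : (1 + t ^ j) * (1 + t ^ j) = 1 + (t ^ j + t ^ j) + t ^ j * t ^ j := by
        noncomm_ring
      rw [he, hxx (t ^ j), add_zero, h1, add_zero]
    refine ⟨⟨1 + t ^ j, 1 + t ^ j, hsq, hsq⟩, rfl, ?_⟩
    ext
    simpa [pow_two] using hsq
  obtain ⟨w1, hw1v, hw1⟩ := mkunit (m - 1) (by omega)
  obtain ⟨w2, hw2v, hw2⟩ := mkunit ((m + 1) / 2) (by omega)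
  have hk1 : (m + 1) / 2 < m - 1 := by omega
  -- three distinct solutions of x^2 = 1
  have hd1 : w1 ≠ 1 := by
    intro h
    apply hmlt (m - 1) (by omega)
    have hc := congrArg Units.val h
    rw [hw1v, Units.val_one] at hc
    exact cancel _ hc
  have hd2 : w2 ≠ 1 := by
    intro h
    apply hmlt ((m + 1) / 2) (by omega)
    have hc := congrArg Units.val h
    rw [hw2v, Units.val_one] at hc
    exact cancel _ hc
  have hd12 : w1 ≠ w2 := by
    intro h
    have hc := congrArg Units.val h
    rw [hw1v, hw2v] at hc
    have heq : t ^ (m - 1) = t ^ ((m + 1) / 2) := add_left_cancel hc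
    apply hmlt (m - 1) (by omega)
    have he : t ^ (m - 1) = t ^ ((m + 1) / 2 + 1) * t ^ (m - 2 - (m + 1) / 2) := by
      rw [← pow_add]; congr 1; omega
    rw [he]
    have hz : t ^ ((m + 1) / 2 + 1) = 0 := by
      rw [pow_succ, ← heq, ← pow_succ]
      have he2 : t ^ (m - 1 + 1) = t ^ m := by congr 1; omega
      rw [he2, hm0]
    rw [hz, zero_mul]
  -- cyclic group: at most 2 solutions of x^2 = 1
  have hle : (Finset.univ.filter fun a : Rˣ => a ^ 2 = 1).card ≤ 2 :=
    IsCyclic.card_pow_eq_one_le (by norm_num)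
  have hsub : ({1, w1, w2} : Finset Rˣ) ⊆ Finset.univ.filter fun a : Rˣ => a ^ 2 = 1 := by
    intro x hx
    simp only [Finset.mem_insert, Finset.mem_singleton] at hx
    simp only [Finset.mem_filter, Finset.mem_univ, true_and]
    rcases hx with rfl | rfl | rfl
    · exact one_pow 2
    · exact hw1
    · exact hw2
  have h3 : ({1, w1, w2} : Finset Rˣ).card = 3 := by
    rw [Finset.card_insert_of_notMem (by simp [hd1.symm, hd2.symm]),
        Finset.card_insert_of_notMem (by simp [hd12]), Finset.card_singleton]
  have := Finset.card_le_card hsub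
  omega
end

section
/- If R is a ring of positive characteristic c whose group of units is a cyclic p-group (or a quasi-cyclic p-group), then c = 2, 4, q, or 2q where q is a Fermat prime. -/
/-!
Since `R` has characteristic `c`, `ZMod c` is a subring of `R`, so `(ZMod c)ˣ` is a finite subgroup
of a cyclic or quasi-cyclic `p`-group: it is cyclic of order `φ c = p ^ k`. By the classification
of the `n` with `(ZMod n)ˣ` cyclic, `c` is `2`, `4`, `q ^ m` or `2 * q ^ m` with `q` an odd prime,
and `φ (q ^ m) = q ^ (m - 1) * (q - 1)` is a prime power only if `m = 1` and `q - 1` is a power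
of `2`.
-/

/-- The quasi-cyclic (Prüfer) `p`-group, realized as the subgroup of `ℂˣ`
consisting of all `p`-power roots of unity. -/
def pruferGroup (p : ℕ) : Subgroup ℂˣ where
  carrier := {x | ∃ n : ℕ, x ^ p ^ n = 1}
  one_mem' := ⟨0, one_pow _⟩
  mul_mem' := by
    rintro a b ⟨m, hm⟩ ⟨n, hn⟩
    exact ⟨m + n, by
      rw [mul_pow, pow_add, pow_mul, hm, one_pow, one_mul, mul_comm (p ^ m), pow_mul, hn,
        one_pow]⟩
  inv_mem' := by
    rintro a ⟨n, hn⟩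
    exact ⟨n, by rw [inv_pow, hn, inv_one]⟩

namespace pruferGroup

theorem isPGroup (p : ℕ) : IsPGroup p (pruferGroup p) :=
  fun x ↦ x.2.imp fun _ hn ↦ Subtype.ext hn

theorem nontrivial {p : ℕ} (hp : p.Prime) : Nontrivial (pruferGroup p) := by
  have hζ := Complex.isPrimitiveRoot_exp p hp.ne_zero
  let ζ : ℂˣ := (hζ.isUnit hp.ne_zero).unit
  have hζmem : ζ ∈ pruferGroup p := ⟨1, Units.ext (by simpa [ζ] using hζ.pow_eq_one)⟩
  refine ⟨⟨⟨ζ, hζmem⟩, 1, fun h ↦ hζ.ne_one hp.one_lt ?_⟩⟩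
  simpa [ζ] using congrArg (fun x : pruferGroup p ↦ ((x : ℂˣ) : ℂ)) h

theorem isCyclic_of_injective {p : ℕ} {G : Type*} [Group G] [Finite G] (f : G →* pruferGroup p)
    (hf : Function.Injective f) : IsCyclic G :=
  isCyclic_of_injective_ringHom ((Units.coeHom ℂ).comp ((pruferGroup p).subtype.comp f))
    (Units.val_injective.comp (Subtype.val_injective.comp hf))

end pruferGroup

theorem Nat.eq_two_pow_add_one_of_totient_prime_pow_eq {q m p k : ℕ} (hq : q.Prime)
    (hq_odd : Odd q) (hm : 1 ≤ m) (hp : p.Prime) (htot : (q ^ m).totient = p ^ k) :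
    m = 1 ∧ ∃ j, 1 ≤ j ∧ q = 2 ^ j + 1 := by
  have hq3 : 3 ≤ q := by have := hq.two_le; obtain ⟨r, rfl⟩ := hq_odd; omega
  rw [Nat.totient_prime_pow hq hm] at htot
  obtain ⟨j, -, hj⟩ := (Nat.dvd_prime_pow hp).mp (Dvd.intro_left _ htot)
  have hj1 : 1 ≤ j := Nat.one_le_iff_ne_zero.mpr (by rintro rfl; simp at hj; omega)
  have hp2 : p = 2 := by
    have h2 : 2 ∣ p ^ j := hj ▸ (Nat.Odd.sub_odd hq_odd odd_one).two_dvd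
    exact ((Nat.prime_dvd_prime_iff_eq Nat.prime_two hp).mp (Nat.prime_two.dvd_of_dvd_pow h2)).symm
  subst hp2
  refine ⟨?_, j, hj1, by omega⟩
  by_contra hm1
  have : q ∣ 2 ^ k := htot ▸ Dvd.dvd.mul_right (dvd_pow_self q (by omega)) _
  have := (Nat.prime_dvd_prime_iff_eq hq Nat.prime_two).mp (hq.dvd_of_dvd_pow this)
  subst this
  exact absurd hq_odd (by decide)

theorem ZMod.eq_two_or_four_or_fermat_of_isCyclic_units {n p : ℕ} [Fact p.Prime] (hn0 : n ≠ 0)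
    (hn1 : n ≠ 1) (hcyc : IsCyclic (ZMod n)ˣ) (hpg : IsPGroup p (ZMod n)ˣ) :
    n = 2 ∨ n = 4 ∨
      ∃ q : ℕ, q.Prime ∧ (∃ k : ℕ, 1 ≤ k ∧ q = 2 ^ k + 1) ∧ (n = q ∨ n = 2 * q) := by
  have : NeZero n := ⟨hn0⟩
  obtain ⟨k, hk⟩ := IsPGroup.iff_card.mp hpg
  rw [Nat.card_eq_fintype_card, ZMod.card_units_eq_totient] at hk
  rcases (ZMod.isCyclic_units_iff n).mp hcyc with h | h | h | h | ⟨q, m, hq, hq_odd, hm, hn⟩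
  · exact absurd h hn0
  · exact absurd h hn1
  · exact Or.inl h
  · exact Or.inr (Or.inl h)
  have htot : (q ^ m).totient = p ^ k := by
    rcases hn with rfl | rfl
    · exact hk
    · rwa [Nat.totient_mul (Nat.coprime_two_left.mpr hq_odd.pow), Nat.totient_two, one_mul] at hk
  obtain ⟨rfl, hfermat⟩ := Nat.eq_two_pow_add_one_of_totient_prime_pow_eq hq hq_odd hm Fact.out htot
  exact Or.inr (Or.inr ⟨q, hq, hfermat, by simpa using hn⟩)

theorem fuchs_stmt9 (R : Type*) [Ring R] (c : ℕ) (hchar : ringChar R = c) (hc : 0 < c)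
    (h : (∃ p n : ℕ, p.Prime ∧ 1 ≤ n ∧ IsCyclic Rˣ ∧ Nat.card Rˣ = p ^ n) ∨
         (∃ p : ℕ, p.Prime ∧ Nonempty (Rˣ ≃* pruferGroup p))) :
    c = 2 ∨ c = 4 ∨
      ∃ q : ℕ, q.Prime ∧ (∃ k : ℕ, 1 ≤ k ∧ q = 2 ^ k + 1) ∧ (c = q ∨ c = 2 * q) := by
  have : CharP R c := hchar ▸ ringChar.charP R
  have : NeZero c := ⟨hc.ne'⟩
  let ι : (ZMod c)ˣ →* Rˣ := Units.map (ZMod.castHom dvd_rfl R).toMonoidHom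
  have hι : Function.Injective ι := Units.map_injective (ZMod.castHom_injective R)
  obtain ⟨p, hp, hcyc, hpg, hR⟩ : ∃ p, p.Prime ∧ IsCyclic (ZMod c)ˣ ∧ IsPGroup p (ZMod c)ˣ ∧
      Nontrivial Rˣ := by
    rcases h with ⟨p, n, hp, hn, hRcyc, hcard⟩ | ⟨p, hp, ⟨e⟩⟩
    · have : Finite Rˣ := Nat.finite_of_card_ne_zero (hcard ▸ (pow_pos hp.pos n).ne')
      exact ⟨p, hp, isCyclic_of_injective ι hι, (IsPGroup.of_card hcard).of_injective ι hι,
        Finite.one_lt_card_iff_nontrivial.mp (hcard ▸ Nat.one_lt_pow (by omega) hp.one_lt)⟩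
    · have := pruferGroup.nontrivial hp
      have heι : Function.Injective (e.toMonoidHom.comp ι) := e.injective.comp hι
      exact ⟨p, hp, pruferGroup.isCyclic_of_injective _ heι,
        (pruferGroup.isPGroup p).of_injective _ heι, e.surjective.nontrivial⟩
  have : Fact p.Prime := ⟨hp⟩
  have : Nontrivial R := by
    obtain ⟨u, hu⟩ := exists_ne (1 : Rˣ)
    exact nontrivial_of_ne (u : R) 1 (mt Units.val_eq_one.mp hu)
  exact ZMod.eq_two_or_four_or_fermat_of_isCyclic_units hc.ne' (CharP.char_ne_one R c) hcyc hpg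
end

section
/- There is no ring of characteristic 0 whose group of units is cyclic of order 2^n for any n ≥ 3, nor one whose group of units is the quasi-cyclic 2-group. -/
lemma Int.sq_ne_two_mul_sq {x y : ℤ} (hy : y ≠ 0) : x ^ 2 ≠ 2 * y ^ 2 := by
  intro h
  have h2 : IsSquare (2 : ℚ) := ⟨x / y, by field_simp; exact_mod_cast h.symm⟩
  exact (irrational_sqrt_ratCast_iff.1 (by exact_mod_cast irrational_sqrt_two)).1 h2

section SqrtTwo

variable {R : Type*} [Ring R] {s : R}

lemma exists_pow_one_add_eq_of_mul_self_eq_two (hs : s * s = 2) {k : ℕ} (hk : 0 < k) :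
    ∃ x y : ℤ, 0 < x ∧ 0 < y ∧ (1 + s) ^ k = x + y * s := by
  induction k, hk using Nat.le_induction with
  | base => exact ⟨1, 1, one_pos, one_pos, by simp⟩
  | succ k _ ih =>
    obtain ⟨x, y, hx, hy, hxy⟩ := ih
    refine ⟨x + 2 * y, x + y, by omega, by omega, ?_⟩
    calc (1 + s) ^ (k + 1) = (x + y * s) * (1 + s) := by rw [pow_succ, hxy]
      _ = x + (x + y) * s + y * (s * s) := by noncomm_ring
      _ = ((x + 2 * y : ℤ) : R) + ((x + y : ℤ) : R) * s := by rw [hs]; push_cast; noncomm_ring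

lemma not_isOfFinOrder_one_add_of_mul_self_eq_two [CharZero R] (hs : s * s = 2) :
    ¬ IsOfFinOrder (1 + s) := by
  rw [isOfFinOrder_iff_pow_eq_one]
  rintro ⟨m, hm, hpow⟩
  obtain ⟨x, y, -, hy, hxy⟩ := exists_pow_one_add_eq_of_mul_self_eq_two hs hm
  have hys : (y : R) * s = ((1 - x : ℤ) : R) := by push_cast; rw [← hpow, hxy]; abel
  have hcast : (((1 - x) * (1 - x) : ℤ) : R) = ((y * y * 2 : ℤ) : R) :=
    calc (((1 - x) * (1 - x) : ℤ) : R) = ((y : R) * s) * ((y : R) * s) := by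
          rw [hys, Int.cast_mul]
      _ = (y : R) * (y : R) * (s * s) := (Int.cast_commute y s).symm.mul_mul_mul_comm _ _
      _ = ((y * y * 2 : ℤ) : R) := by rw [hs]; push_cast; rfl
  have hint : (1 - x) * (1 - x) = y * y * 2 := Int.cast_injective hcast
  exact Int.sq_ne_two_mul_sq (x := 1 - x) hy.ne' (by linear_combination hint)

end SqrtTwo

lemma Units.exists_not_isOfFinOrder_of_pow_four_eq_neg_one {R : Type*} [Ring R] [CharZero R]
    {a : R} (ha : a ^ 4 = -1) : ∃ v : Rˣ, ¬ IsOfFinOrder v := by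
  have hs : (a - a ^ 3) * (a - a ^ 3) = 2 :=
    calc (a - a ^ 3) * (a - a ^ 3) = a ^ 2 - 2 * a ^ 4 + a ^ 4 * a ^ 2 := by noncomm_ring
      _ = 2 := by rw [ha]; noncomm_ring; norm_num
  set s := a - a ^ 3
  have hunit : (1 + s) * (s - 1) = 1 ∧ (s - 1) * (1 + s) = 1 := by
    constructor <;> noncomm_ring <;> rw [hs] <;> norm_num
  refine ⟨⟨1 + s, s - 1, hunit.1, hunit.2⟩, ?_⟩
  rw [← Units.isOfFinOrder_val]
  exact not_isOfFinOrder_one_add_of_mul_self_eq_two hs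

lemma Units.pow_four_eq_neg_one_of_orderOf_eq_eight {R : Type*} [Ring R] [CharZero R]
    (huniq : ∀ a b : Rˣ, orderOf a = 2 → orderOf b = 2 → a = b) {g : Rˣ}
    (hg : orderOf g = 8) :
    g ^ 4 = -1 := by
  refine huniq _ _ ?_ ?_
  · simpa [hg] using orderOf_pow_orderOf_div (x := g) (n := 2) (by simp [hg]) (by simp [hg])
  · rw [← orderOf_units, Units.val_neg, Units.val_one, orderOf_neg_one, ringChar.eq_zero]
    simp

lemma Units.exists_not_isOfFinOrder_of_orderOf_eq_eight {R : Type*} [Ring R] [CharZero R]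
    (huniq : ∀ a b : Rˣ, orderOf a = 2 → orderOf b = 2 → a = b) {g : Rˣ}
    (hg : orderOf g = 8) :
    ∃ v : Rˣ, ¬ IsOfFinOrder v :=
  Units.exists_not_isOfFinOrder_of_pow_four_eq_neg_one (a := (g : R)) <| by
    rw [← Units.val_pow_eq_pow_val, Units.pow_four_eq_neg_one_of_orderOf_eq_eight huniq hg,
      Units.val_neg, Units.val_one]

lemma IsCyclic.eq_of_orderOf_eq_two {G : Type*} [Group G] [Finite G] [IsCyclic G] {a b : G}
    (ha : orderOf a = 2) (hb : orderOf b = 2) : a = b := by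
  classical
  have : Fintype G := Fintype.ofFinite G
  have hcard := IsCyclic.card_orderOf_eq_totient (α := G) (d := 2) (ha ▸ orderOf_dvd_card)
  rw [Nat.totient_two, Finset.card_eq_one] at hcard
  obtain ⟨c, hc⟩ := hcard
  have hmem : ∀ x : G, orderOf x = 2 → x = c := fun x hx ↦
    Finset.mem_singleton.1 (hc ▸ Finset.mem_filter.2 ⟨Finset.mem_univ x, hx⟩)
  rw [hmem a ha, hmem b hb]

lemma IsCyclic.exists_orderOf_eq_of_dvd_natCard {G : Type*} [Group G] [Finite G] [IsCyclic G]
    {d : ℕ} (hd : d ∣ Nat.card G) : ∃ g : G, orderOf g = d := by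
  obtain ⟨g, hg⟩ := IsCyclic.exists_ofOrder_eq_natCard (α := G)
  exact ⟨_, orderOf_pow_orderOf_div (hg ▸ Nat.card_pos.ne') (hg ▸ hd)⟩

lemma Subgroup.eq_of_orderOf_eq_two {K : Type*} [CommRing K] [IsDomain K] (hK : ringChar K ≠ 2)
    {H : Subgroup Kˣ} {a b : H} (ha : orderOf a = 2) (hb : orderOf b = 2) : a = b := by
  have hneg : ∀ x : H, orderOf x = 2 → ((x : Kˣ) : K) = -1 := fun x hx ↦ by
    rwa [← CharP.orderOf_eq_two_iff _ hK, orderOf_units, Subgroup.orderOf_coe]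
  exact Subtype.ext <| Units.ext <| (hneg a ha).trans (hneg b hb).symm

lemma pruferGroup.isOfFinOrder {p : ℕ} [NeZero p] (x : pruferGroup p) : IsOfFinOrder x := by
  obtain ⟨k, hk⟩ := x.2
  exact isOfFinOrder_iff_pow_eq_one.2 ⟨p ^ k, pow_pos (Nat.pos_of_neZero p) k, Subtype.ext hk⟩

lemma pruferGroup.exists_orderOf_eq_pow (p k : ℕ) [NeZero p] :
    ∃ x : pruferGroup p, orderOf x = p ^ k := by
  have hζ := Complex.isPrimitiveRoot_exp (p ^ k) (NeZero.ne _)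
  let u : ℂˣ := (hζ.isUnit (NeZero.ne _)).unit
  have hu : orderOf u = p ^ k := by rw [← orderOf_units, IsUnit.unit_spec, ← hζ.eq_orderOf]
  refine ⟨⟨u, k, ?_⟩, ?_⟩
  · rw [← hu]; exact pow_orderOf_eq_one u
  · rw [← Subgroup.orderOf_coe]; exact hu

theorem fuchs_stmt14 (R : Type*) [Ring R] (hchar : ringChar R = 0) :
    (∀ n : ℕ, 3 ≤ n → ¬ (IsCyclic Rˣ ∧ Nat.card Rˣ = 2 ^ n)) ∧
      ¬ Nonempty (Rˣ ≃* pruferGroup 2) := by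
  have : CharP R 0 := ringChar.of_eq hchar
  have : CharZero R := CharP.charP_to_charZero R
  constructor
  · rintro n hn ⟨hcyc, hcard⟩
    have : Finite Rˣ := Nat.finite_of_card_ne_zero (by rw [hcard]; positivity)
    obtain ⟨g, hg⟩ := IsCyclic.exists_orderOf_eq_of_dvd_natCard (G := Rˣ) (d := 8)
      (hcard ▸ pow_dvd_pow 2 hn)
    obtain ⟨v, hv⟩ := Units.exists_not_isOfFinOrder_of_orderOf_eq_eight
      (fun _ _ ↦ IsCyclic.eq_of_orderOf_eq_two) hg
    exact hv (isOfFinOrder_of_finite v)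
  · rintro ⟨φ⟩
    obtain ⟨g, hg⟩ := pruferGroup.exists_orderOf_eq_pow 2 3
    have huniq (a b : Rˣ) (ha : orderOf a = 2) (hb : orderOf b = 2) : a = b :=
      φ.injective <| Subgroup.eq_of_orderOf_eq_two (by simp)
        (by rwa [φ.orderOf_eq]) (by rwa [φ.orderOf_eq])
    obtain ⟨v, hv⟩ := Units.exists_not_isOfFinOrder_of_orderOf_eq_eight huniq
      (g := φ.symm g) (by rw [φ.symm.orderOf_eq, hg]; rfl)
    exact hv <| (φ.injective.isOfFinOrder_iff (f := φ.toMonoidHom)).1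
      (pruferGroup.isOfFinOrder (φ v))
end

section
/- Let R be a ring of characteristic 4 whose group of units is cyclic of order 2^n (n ≥ 1) or quasi-cyclic. Then the quotient map R → R/(2) induces a surjection on unit groups, and its kernel is contained in {1, -1}. -/
/-- For a ring `R` of characteristic 4 whose unit group is cyclic of order `2 ^ n` or
quasi-cyclic, the quotient map `R → R/(2)` is surjective on units (every element of `R`
that is invertible modulo the two-sided ideal `(2) = 2R` is a unit of `R`), and its
kernel is contained in `{1, -1}`. -/
theorem fuchs_stmt15 (R : Type*) [Ring R] (hchar : ringChar R = 4)
    (h : (∃ n : ℕ, 1 ≤ n ∧ IsCyclic Rˣ ∧ Nat.card Rˣ = 2 ^ n) ∨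
         Nonempty (Rˣ ≃* pruferGroup 2)) :
    (∀ x : R, (∃ y t s : R, x * y = 1 + 2 * t ∧ y * x = 1 + 2 * s) → IsUnit x) ∧
    (∀ u : Rˣ, (∃ t : R, (u : R) = 1 + 2 * t) → (u : R) = 1 ∨ (u : R) = -1) := by
  have h4 : (4 : R) = 0 := by
    have := ringChar.Nat.cast_ringChar (R := R)
    rw [hchar] at this
    exact_mod_cast this
  have key : ∀ t : R, (1 + 2*t) * (1 + 2*t) = 1 := by
    intro t
    have : (1+2*t)*(1+2*t) = 1 + 4*t + 4*(t*t) := by noncomm_ring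
    rw [this, h4]; simp
  have h2 : (2 : R) ≠ 0 := by
    intro h2
    have : ((2:ℕ) : R) = 0 := by exact_mod_cast h2
    have := ringChar.dvd this
    rw [hchar] at this
    omega
  have hneg : (-1 : Rˣ) ≠ 1 := by
    intro hm
    apply h2
    have hm' : (-1 : R) = 1 := by
      have := congrArg (Units.val) hm
      simpa using this
    have := congrArg (1 + ·) hm'
    simp at this
    rw [show (2:R) = 1 + 1 by norm_num]
    exact this.symm
  constructor
  · rintro x ⟨y, t, s, hxy, hyx⟩
    refine isUnit_iff_exists.mpr ⟨y * x * y, ?_, ?_⟩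
    · have e1 : x * (y * x * y) = (x*y) * (x*y) := by noncomm_ring
      rw [e1, hxy, key]
    · have e1 : (y * x * y) * x = (y*x) * (y*x) := by noncomm_ring
      rw [e1, hyx, key]
  · rintro u ⟨t, hu⟩
    have hu2 : u ^ 2 = 1 := by
      ext
      push_cast
      rw [sq, hu, key]
    have goal_of : u = 1 ∨ u = -1 → (u : R) = 1 ∨ (u : R) = -1 := by
      rintro (rfl | rfl) <;> simp
    apply goal_of
    rcases h with ⟨n, hn, hcyc, hcard⟩ | he
    · have hfin : Finite Rˣ := Nat.finite_of_card_ne_zero (by rw [hcard]; positivity)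
      have : Fintype Rˣ := Fintype.ofFinite Rˣ
      classical
      by_contra hcon
      push_neg at hcon
      obtain ⟨hu1, hum1⟩ := hcon
      have hle := IsCyclic.card_pow_eq_one_le (α := Rˣ) (n := 2) (by norm_num)
      have hsub : ({1, -1, u} : Finset Rˣ) ⊆ Finset.univ.filter fun a => a ^ 2 = 1 := by
        intro a ha
        simp only [Finset.mem_insert, Finset.mem_singleton] at ha
        simp only [Finset.mem_filter, Finset.mem_univ, true_and]
        rcases ha with rfl | rfl | rfl
        · simp
        · simp
        · exact hu2
      have hcard3 : ({1, -1, u} : Finset Rˣ).card = 3 := by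
        rw [Finset.card_insert_of_notMem, Finset.card_insert_of_notMem,
          Finset.card_singleton]
        · simp only [Finset.mem_singleton]
          exact fun hh => hum1 hh.symm
        · simp only [Finset.mem_insert, Finset.mem_singleton, not_or]
          exact ⟨fun hh => hneg hh.symm, fun hh => hu1 hh.symm⟩
      have := (Finset.card_le_card hsub).trans hle
      rw [hcard3] at this
      omega
    · -- Prüfer case
      obtain ⟨e⟩ := he
      have hv2 : (e u) ^ 2 = 1 := by rw [← map_pow, hu2, map_one]
      have hw2 : (e (-1)) ^ 2 = 1 := by
        rw [← map_pow]
        have : (-1 : Rˣ) ^ 2 = 1 := by rw [neg_one_sq]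
        rw [this, map_one]
      have sqc : ∀ z : ℂ, z ^ 2 = 1 → z = 1 ∨ z = -1 := by
        intro z hz
        have : (z - 1) * (z + 1) = 0 := by linear_combination hz
        rcases mul_eq_zero.mp this with h | h
        · left; linear_combination h
        · right; linear_combination h
      have val2 : ∀ g : pruferGroup 2, g ^ 2 = 1 → ((g : ℂˣ) : ℂ) = 1 ∨ ((g : ℂˣ) : ℂ) = -1 := by
        intro g hg
        apply sqc
        have : ((g ^ 2 : pruferGroup 2) : ℂˣ) = 1 := by rw [hg]; rfl
        have := congrArg (Units.val) this
        push_cast at this ⊢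
        exact_mod_cast this
      have inj : ∀ g g' : pruferGroup 2, ((g : ℂˣ) : ℂ) = ((g' : ℂˣ) : ℂ) → g = g' := by
        intro g g' hgg
        ext
        exact hgg
      have hwne : e (-1) ≠ 1 := fun hh => hneg (by
        have := e.injective (hh.trans (map_one e).symm)
        exact this)
      have hwval : ((e (-1) : ℂˣ) : ℂ) = -1 := by
        rcases val2 _ hw2 with h | h
        · exfalso; apply hwne; exact inj _ 1 (by simpa using h)
        · exact h
      rcases val2 _ hv2 with h | h
      · left
        exact e.injective (by rw [map_one]; exact inj _ 1 (by simpa using h))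
      · right
        exact e.injective (inj _ _ (h.trans hwval.symm))
end
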